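/- arXiv:2005.13941 — 3 statements merged into one kernel-verified Lean document; each statement's English description precedes it below -/
import Mathlib

section
/- Let (X,d) be a metric space, let A ⊆ X, and let {σ_{xy}}_{x,y∈A} be a collection of geodesics σ_{xy} : [0,1] → X such that σ_{xy}(0) = x, σ_{xy}(1) = y, and σ_{xy}(t) = σ_{yx}(1−t) for all t ∈ [0,1] and all x, y ∈ A. If d(σ_{xy}(t), σ_{xz}(t)) ≤ t·d(y,z) for all x, y, z ∈ A and all t ∈ [0,1], then d(σ_{x₁x₂}(t), σ_{y₁y₂}(t)) ≤ W₁((1−t)·δ_{x₁} + t·δ_{x₂}, (1−t)·δ_{y₁} + t·δ_{y₂}) for all t ∈ [0,1] and all x₁, x₂, y₁, y₂ ∈ A. -/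
open scoped ENNReal
open MeasureTheory

/-- The first Wasserstein distance between two (probability) measures: the infimum of
`∫ d(x,y) dγ` over all couplings `γ` of the pair, i.e. probability measures on `X × X`
with first marginal `μ` and second marginal `ν`. -/
noncomputable def W1 {X : Type*} [MetricSpace X] [MeasurableSpace X]
    (μ ν : MeasureTheory.Measure X) : ℝ≥0∞ :=
  ⨅ (γ : MeasureTheory.Measure (X × X)) (_ : MeasureTheory.IsProbabilityMeasure γ ∧
      γ.map Prod.fst = μ ∧ γ.map Prod.snd = ν),
    ∫⁻ p, edist p.1 p.2 ∂γ

/-- Membership in `P₁(X)`: a Radon probability measure with finite first moment. -/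
def MemP1 {X : Type*} [MetricSpace X] [MeasurableSpace X]
    (μ : MeasureTheory.Measure X) : Prop :=
  MeasureTheory.IsProbabilityMeasure μ ∧ μ.InnerRegular ∧
    ∀ x₀ : X, (∫⁻ x, edist x x₀ ∂μ) ≠ ⊤

/-- `P₁(X)`: the space of Radon probability measures on `X` with finite first moment. -/
abbrev P1 (X : Type*) [MetricSpace X] [MeasurableSpace X] : Type _ :=
  {μ : MeasureTheory.Measure X // MemP1 μ}

/-- A contracting barycenter map: a `1`-Lipschitz map `β : P₁(X) → X` (with respect to the
first Wasserstein distance) such that `β δ_x = x` for every `x`. -/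
def IsContractingBarycenter {X : Type*} [MetricSpace X] [MeasurableSpace X]
    (β : P1 X → X) : Prop :=
  (∀ μ ν : P1 X, edist (β μ) (β ν) ≤ W1 μ.1 ν.1) ∧
    ∀ (x : X) (μ : P1 X), μ.1 = MeasureTheory.Measure.dirac x → β μ = x

/-! Two couplings of `(1-t)δ_{x₁} + tδ_{x₂}` and `(1-t)δ_{y₁} + tδ_{y₂}` are extreme: the
parallel one, and for `t ≤ 1/2` the one sending mass `t` across in both directions. Their costs
bound `d(σ_{x₁x₂}(t), σ_{y₁y₂}(t))` by the triangle inequality through `σ_{x₁y₂}(t)`, resp.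
through `σ_{x₁y₁}(t) = σ_{y₁x₁}(1-t)` and `σ_{y₁x₁}(t)`. Every coupling is a mixture of these
two, so `W₁` is at least the smaller cost; instead of decomposing couplings, this is certified by
weak Kantorovich duality with the `1`-Lipschitz potential
`z ↦ min (d(z,y₁) + d(x₁,y₂)) (d(z,y₂) + d(x₁,y₁))`. -/

open Set

section TwoPoint

variable {X : Type*} [MeasurableSpace X]

noncomputable def twoPointMeasure (t : ℝ) (x y : X) : Measure X :=
  ENNReal.ofReal (1 - t) • Measure.dirac x + ENNReal.ofReal t • Measure.dirac y

theorem twoPointMeasure_comm (t : ℝ) (x y : X) :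
    twoPointMeasure t x y = twoPointMeasure (1 - t) y x := by
  rw [twoPointMeasure, twoPointMeasure, sub_sub_cancel, add_comm]

theorem lintegral_ofReal_twoPointMeasure {φ : X → ℝ} (hφ : Measurable φ) (hφ0 : 0 ≤ φ)
    {t : ℝ} (ht : t ∈ Icc (0 : ℝ) 1) (x y : X) :
    ∫⁻ z, ENNReal.ofReal (φ z) ∂twoPointMeasure t x y =
      ENNReal.ofReal ((1 - t) * φ x + t * φ y) := by
  have hm : Measurable fun z => ENNReal.ofReal (φ z) := ENNReal.measurable_ofReal.comp hφ
  rw [twoPointMeasure, lintegral_add_measure, lintegral_smul_measure, lintegral_smul_measure,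
    lintegral_dirac' _ hm, lintegral_dirac' _ hm, smul_eq_mul, smul_eq_mul,
    ← ENNReal.ofReal_mul (sub_nonneg.2 ht.2), ← ENNReal.ofReal_mul ht.1,
    ← ENNReal.ofReal_add (mul_nonneg (sub_nonneg.2 ht.2) (hφ0 x)) (mul_nonneg ht.1 (hφ0 y))]

end TwoPoint

section Duality

variable {X : Type*} [MetricSpace X] [MeasurableSpace X] [OpensMeasurableSpace X]

theorem lintegral_ofReal_le_lintegral_add_W1 {φ : X → ℝ} (hφ : LipschitzWith 1 φ)
    (μ ν : Measure X) :
    ∫⁻ x, ENNReal.ofReal (φ x) ∂μ ≤ ∫⁻ x, ENNReal.ofReal (φ x) ∂ν + W1 μ ν := by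
  have hm : Measurable fun z => ENNReal.ofReal (φ z) :=
    ENNReal.measurable_ofReal.comp hφ.continuous.measurable
  have hpt (a b : X) : ENNReal.ofReal (φ a) ≤ ENNReal.ofReal (φ b) + edist a b :=
    calc ENNReal.ofReal (φ a) ≤ ENNReal.ofReal (φ b + dist a b) :=
          ENNReal.ofReal_le_ofReal (by simpa using hφ.le_add_mul a b)
      _ ≤ ENNReal.ofReal (φ b) + edist a b := by
          rw [edist_dist]; exact ENNReal.ofReal_add_le
  rw [W1, ENNReal.add_iInf]
  refine le_iInf fun γ => ?_
  rw [ENNReal.add_iInf]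
  refine le_iInf fun ⟨_, hfst, hsnd⟩ => ?_
  have hm₂ : Measurable fun p : X × X => ENNReal.ofReal (φ p.2) := hm.comp measurable_snd
  rw [← hfst, ← hsnd, lintegral_map hm measurable_fst, lintegral_map hm measurable_snd,
    ← lintegral_add_left hm₂]
  exact lintegral_mono fun p => hpt p.1 p.2

theorem ofReal_sub_le_W1_twoPointMeasure {φ : X → ℝ} (hφ : LipschitzWith 1 φ) (hφ0 : 0 ≤ φ)
    {t : ℝ} (ht : t ∈ Icc (0 : ℝ) 1) (x₁ x₂ y₁ y₂ : X) :
    ENNReal.ofReal ((1 - t) * φ x₁ + t * φ x₂ - ((1 - t) * φ y₁ + t * φ y₂)) ≤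
      W1 (twoPointMeasure t x₁ x₂) (twoPointMeasure t y₁ y₂) := by
  have h := lintegral_ofReal_le_lintegral_add_W1 hφ (twoPointMeasure t x₁ x₂)
    (twoPointMeasure t y₁ y₂)
  rw [lintegral_ofReal_twoPointMeasure hφ.continuous.measurable hφ0 ht,
    lintegral_ofReal_twoPointMeasure hφ.continuous.measurable hφ0 ht] at h
  rw [ENNReal.ofReal_sub _ (add_nonneg (mul_nonneg (sub_nonneg.2 ht.2) (hφ0 y₁))
    (mul_nonneg ht.1 (hφ0 y₂)))]
  exact tsub_le_iff_left.2 h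

theorem ofReal_le_W1_twoPointMeasure {t : ℝ} (ht : t ∈ Icc (0 : ℝ) 1) (x₁ x₂ y₁ y₂ : X) :
    ENNReal.ofReal ((1 - 2 * t) * dist x₁ y₁ +
        t * min (dist x₁ y₂ + dist x₂ y₁) (dist x₁ y₁ + dist x₂ y₂)) ≤
      W1 (twoPointMeasure t x₁ x₂) (twoPointMeasure t y₁ y₂) := by
  set φ : X → ℝ := fun z => min (dist z y₁ + dist x₁ y₂) (dist z y₂ + dist x₁ y₁)
  have hφ : LipschitzWith 1 φ := by
    simpa using ((LipschitzWith.dist_left y₁).add (LipschitzWith.const (dist x₁ y₂))).min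
      ((LipschitzWith.dist_left y₂).add (LipschitzWith.const (dist x₁ y₁)))
  have hφ0 : 0 ≤ φ := fun z => le_min (by positivity) (by positivity)
  have hx₁ : φ x₁ = dist x₁ y₁ + dist x₁ y₂ := by simp [φ, add_comm]
  have hy₁ : φ y₁ = dist x₁ y₂ := by
    simp only [φ, dist_self, zero_add]
    exact min_eq_left (by linarith [dist_triangle x₁ y₁ y₂])
  have hy₂ : φ y₂ = dist x₁ y₁ := by
    simp only [φ, dist_self, zero_add]
    exact min_eq_right (by linarith [dist_triangle x₁ y₂ y₁])
  have hx₂ : φ x₂ = min (dist x₁ y₂ + dist x₂ y₁) (dist x₁ y₁ + dist x₂ y₂) := by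
    rw [add_comm (dist x₁ y₂), add_comm (dist x₁ y₁)]
  convert ofReal_sub_le_W1_twoPointMeasure hφ hφ0 ht x₁ x₂ y₁ y₂ using 2
  rw [hx₁, hx₂, hy₁, hy₂]
  ring

end Duality

section ConicalFamily

variable {X : Type*} [PseudoMetricSpace X] {A : Set X} {σ : X → X → ℝ → X}

theorem dist_conical_le_parallel
    (hrev : ∀ x ∈ A, ∀ y ∈ A, ∀ t ∈ Icc (0 : ℝ) 1, σ x y t = σ y x (1 - t))
    (hcon : ∀ x ∈ A, ∀ y ∈ A, ∀ z ∈ A, ∀ t ∈ Icc (0 : ℝ) 1,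
      dist (σ x y t) (σ x z t) ≤ t * dist y z)
    {t : ℝ} (ht : t ∈ Icc (0 : ℝ) 1) {x₁ x₂ y₁ y₂ : X}
    (hx₁ : x₁ ∈ A) (hx₂ : x₂ ∈ A) (hy₁ : y₁ ∈ A) (hy₂ : y₂ ∈ A) :
    dist (σ x₁ x₂ t) (σ y₁ y₂ t) ≤ (1 - t) * dist x₁ y₁ + t * dist x₂ y₂ :=
  calc dist (σ x₁ x₂ t) (σ y₁ y₂ t)
      ≤ dist (σ x₁ x₂ t) (σ x₁ y₂ t) + dist (σ x₁ y₂ t) (σ y₁ y₂ t) := dist_triangle _ _ _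
    _ = dist (σ x₁ x₂ t) (σ x₁ y₂ t) + dist (σ y₂ x₁ (1 - t)) (σ y₂ y₁ (1 - t)) := by
        rw [hrev x₁ hx₁ y₂ hy₂ t ht, hrev y₁ hy₁ y₂ hy₂ t ht]
    _ ≤ t * dist x₂ y₂ + (1 - t) * dist x₁ y₁ :=
        add_le_add (hcon x₁ hx₁ x₂ hx₂ y₂ hy₂ t ht)
          (hcon y₂ hy₂ x₁ hx₁ y₁ hy₁ (1 - t) (Icc.mem_iff_one_sub_mem.1 ht))
    _ = (1 - t) * dist x₁ y₁ + t * dist x₂ y₂ := add_comm _ _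

theorem dist_conical_le_crossed
    (hgeo : ∀ x ∈ A, ∀ y ∈ A, ∀ s ∈ Icc (0 : ℝ) 1, ∀ t ∈ Icc (0 : ℝ) 1,
      dist (σ x y s) (σ x y t) = |s - t| * dist x y)
    (hrev : ∀ x ∈ A, ∀ y ∈ A, ∀ t ∈ Icc (0 : ℝ) 1, σ x y t = σ y x (1 - t))
    (hcon : ∀ x ∈ A, ∀ y ∈ A, ∀ z ∈ A, ∀ t ∈ Icc (0 : ℝ) 1,
      dist (σ x y t) (σ x z t) ≤ t * dist y z)
    {t : ℝ} (ht : t ∈ Icc (0 : ℝ) 1) {x₁ x₂ y₁ y₂ : X}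
    (hx₁ : x₁ ∈ A) (hx₂ : x₂ ∈ A) (hy₁ : y₁ ∈ A) (hy₂ : y₂ ∈ A) :
    dist (σ x₁ x₂ t) (σ y₁ y₂ t) ≤
      |1 - 2 * t| * dist x₁ y₁ + t * (dist x₁ y₂ + dist x₂ y₁) :=
  calc dist (σ x₁ x₂ t) (σ y₁ y₂ t)
      ≤ dist (σ x₁ x₂ t) (σ y₁ x₁ (1 - t)) + dist (σ y₁ x₁ (1 - t)) (σ y₁ x₁ t) +
          dist (σ y₁ x₁ t) (σ y₁ y₂ t) := dist_triangle4 _ _ _ _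
    _ ≤ t * dist x₂ y₁ + |1 - t - t| * dist y₁ x₁ + t * dist x₁ y₂ := by
        gcongr
        · rw [← hrev x₁ hx₁ y₁ hy₁ t ht]
          exact hcon x₁ hx₁ x₂ hx₂ y₁ hy₁ t ht
        · exact (hgeo y₁ hy₁ x₁ hx₁ _ (Icc.mem_iff_one_sub_mem.1 ht) t ht).le
        · exact hcon y₁ hy₁ x₁ hx₁ y₂ hy₂ t ht
    _ = |1 - 2 * t| * dist x₁ y₁ + t * (dist x₁ y₂ + dist x₂ y₁) := by
        rw [sub_sub, ← two_mul, dist_comm y₁ x₁]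
        ring

theorem dist_conical_le_of_le_half
    (hgeo : ∀ x ∈ A, ∀ y ∈ A, ∀ s ∈ Icc (0 : ℝ) 1, ∀ t ∈ Icc (0 : ℝ) 1,
      dist (σ x y s) (σ x y t) = |s - t| * dist x y)
    (hrev : ∀ x ∈ A, ∀ y ∈ A, ∀ t ∈ Icc (0 : ℝ) 1, σ x y t = σ y x (1 - t))
    (hcon : ∀ x ∈ A, ∀ y ∈ A, ∀ z ∈ A, ∀ t ∈ Icc (0 : ℝ) 1,
      dist (σ x y t) (σ x z t) ≤ t * dist y z)
    {t : ℝ} (ht : t ∈ Icc (0 : ℝ) 1) (ht' : t ≤ 1 / 2) {x₁ x₂ y₁ y₂ : X}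
    (hx₁ : x₁ ∈ A) (hx₂ : x₂ ∈ A) (hy₁ : y₁ ∈ A) (hy₂ : y₂ ∈ A) :
    dist (σ x₁ x₂ t) (σ y₁ y₂ t) ≤ (1 - 2 * t) * dist x₁ y₁ +
      t * min (dist x₁ y₂ + dist x₂ y₁) (dist x₁ y₁ + dist x₂ y₂) := by
  have hpar := dist_conical_le_parallel hrev hcon ht hx₁ hx₂ hy₁ hy₂
  have hcross := dist_conical_le_crossed hgeo hrev hcon ht hx₁ hx₂ hy₁ hy₂
  rw [abs_of_nonneg (by linarith)] at hcross
  rcases le_total (dist x₁ y₂ + dist x₂ y₁) (dist x₁ y₁ + dist x₂ y₂) with h | h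
  · rw [min_eq_left h]; linarith
  · rw [min_eq_right h]; linarith

end ConicalFamily

theorem edist_conical_le_W1_of_le_half {X : Type*} [MetricSpace X] [MeasurableSpace X]
    [OpensMeasurableSpace X] {A : Set X} {σ : X → X → ℝ → X}
    (hgeo : ∀ x ∈ A, ∀ y ∈ A, ∀ s ∈ Icc (0 : ℝ) 1, ∀ t ∈ Icc (0 : ℝ) 1,
      dist (σ x y s) (σ x y t) = |s - t| * dist x y)
    (hrev : ∀ x ∈ A, ∀ y ∈ A, ∀ t ∈ Icc (0 : ℝ) 1, σ x y t = σ y x (1 - t))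
    (hcon : ∀ x ∈ A, ∀ y ∈ A, ∀ z ∈ A, ∀ t ∈ Icc (0 : ℝ) 1,
      dist (σ x y t) (σ x z t) ≤ t * dist y z)
    {t : ℝ} (ht : t ∈ Icc (0 : ℝ) 1) (ht' : t ≤ 1 / 2) {x₁ x₂ y₁ y₂ : X}
    (hx₁ : x₁ ∈ A) (hx₂ : x₂ ∈ A) (hy₁ : y₁ ∈ A) (hy₂ : y₂ ∈ A) :
    edist (σ x₁ x₂ t) (σ y₁ y₂ t) ≤ W1 (twoPointMeasure t x₁ x₂) (twoPointMeasure t y₁ y₂) := by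
  rw [edist_dist]
  exact (ENNReal.ofReal_le_ofReal
    (dist_conical_le_of_le_half hgeo hrev hcon ht ht' hx₁ hx₂ hy₁ hy₂)).trans
    (ofReal_le_W1_twoPointMeasure ht x₁ x₂ y₁ y₂)

theorem dist_le_W1_of_conical_family_general
    {X : Type*} [MetricSpace X] [MeasurableSpace X] [BorelSpace X]
    (A : Set X) (σ : X → X → ℝ → X)
    (hgeo : ∀ x ∈ A, ∀ y ∈ A, ∀ s ∈ Set.Icc (0:ℝ) 1, ∀ t ∈ Set.Icc (0:ℝ) 1,
      dist (σ x y s) (σ x y t) = |s - t| * dist x y)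
    (hrev : ∀ x ∈ A, ∀ y ∈ A, ∀ t ∈ Set.Icc (0:ℝ) 1, σ x y t = σ y x (1 - t))
    (hcon : ∀ x ∈ A, ∀ y ∈ A, ∀ z ∈ A, ∀ t ∈ Set.Icc (0:ℝ) 1,
      dist (σ x y t) (σ x z t) ≤ t * dist y z) :
    ∀ t ∈ Set.Icc (0:ℝ) 1, ∀ x₁ ∈ A, ∀ x₂ ∈ A, ∀ y₁ ∈ A, ∀ y₂ ∈ A,
      edist (σ x₁ x₂ t) (σ y₁ y₂ t) ≤
        W1 (ENNReal.ofReal (1 - t) • Measure.dirac x₁ + ENNReal.ofReal t • Measure.dirac x₂)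
          (ENNReal.ofReal (1 - t) • Measure.dirac y₁ + ENNReal.ofReal t • Measure.dirac y₂) := by
  intro t ht x₁ hx₁ x₂ hx₂ y₁ hy₁ y₂ hy₂
  rcases le_total t (1 / 2) with h | h
  · exact edist_conical_le_W1_of_le_half hgeo hrev hcon ht h hx₁ hx₂ hy₁ hy₂
  · -- reversing both geodesics and both measures trades `t` for `1 - t ≤ 1 / 2`
    rw [hrev x₁ hx₁ x₂ hx₂ t ht, hrev y₁ hy₁ y₂ hy₂ t ht]
    change _ ≤ W1 (twoPointMeasure t x₁ x₂) (twoPointMeasure t y₁ y₂)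
    rw [twoPointMeasure_comm t x₁ x₂, twoPointMeasure_comm t y₁ y₂]
    exact edist_conical_le_W1_of_le_half hgeo hrev hcon (Icc.mem_iff_one_sub_mem.1 ht)
      (by linarith) hx₂ hx₁ hy₂ hy₁

/-- **Lemma 3.1.** Let `A ⊆ X` and let `{σ x y}_{x,y ∈ A}` be a family of geodesics with
`σ x y 0 = x`, `σ x y 1 = y`, `σ x y t = σ y x (1-t)`, and suppose
`dist (σ x y t) (σ x z t) ≤ t * dist y z` for all `x, y, z ∈ A` and `t ∈ [0,1]`. Then
`dist (σ x₁ x₂ t) (σ y₁ y₂ t) ≤ W₁((1-t)δ_{x₁} + tδ_{x₂}, (1-t)δ_{y₁} + tδ_{y₂})`. -/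
theorem dist_le_W1_of_conical_family
    {X : Type*} [MetricSpace X] [MeasurableSpace X] [BorelSpace X]
    (A : Set X) (σ : X → X → ℝ → X)
    (h0 : ∀ x ∈ A, ∀ y ∈ A, σ x y 0 = x)
    (h1 : ∀ x ∈ A, ∀ y ∈ A, σ x y 1 = y)
    (hgeo : ∀ x ∈ A, ∀ y ∈ A, ∀ s ∈ Set.Icc (0:ℝ) 1, ∀ t ∈ Set.Icc (0:ℝ) 1,
      dist (σ x y s) (σ x y t) = |s - t| * dist x y)
    (hrev : ∀ x ∈ A, ∀ y ∈ A, ∀ t ∈ Set.Icc (0:ℝ) 1, σ x y t = σ y x (1 - t))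
    (hcon : ∀ x ∈ A, ∀ y ∈ A, ∀ z ∈ A, ∀ t ∈ Set.Icc (0:ℝ) 1,
      dist (σ x y t) (σ x z t) ≤ t * dist y z) :
    ∀ t ∈ Set.Icc (0:ℝ) 1, ∀ x₁ ∈ A, ∀ x₂ ∈ A, ∀ y₁ ∈ A, ∀ y₂ ∈ A,
      edist (σ x₁ x₂ t) (σ y₁ y₂ t) ≤
        W1 (ENNReal.ofReal (1 - t) • Measure.dirac x₁ + ENNReal.ofReal t • Measure.dirac x₂)
          (ENNReal.ofReal (1 - t) • Measure.dirac y₁ + ENNReal.ofReal t • Measure.dirac y₂) :=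
  dist_le_W1_of_conical_family_general A σ hgeo hrev hcon
end

section
/- Let V be a real Banach space and let σ be a conical geodesic bicombing on V (with the metric induced by the norm), not assumed reversible. Then σ(x,y,t) = (1−t)·x + t·y for all x, y ∈ V and t ∈ [0,1]. In particular, V admits exactly one conical geodesic bicombing, given by linear segments. -/
/-- A geodesic bicombing on a metric space `X`: a map `σ : X × X × [0,1] → X` such that
`σ x y 0 = x`, `σ x y 1 = y` and `dist (σ x y s) (σ x y t) = |s - t| * dist x y`
for all `s, t ∈ [0,1]`. -/
def IsGeodesicBicombing {X : Type*} [MetricSpace X] (σ : X → X → ℝ → X) : Prop :=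
  (∀ x y : X, σ x y 0 = x) ∧ (∀ x y : X, σ x y 1 = y) ∧
    ∀ x y : X, ∀ s ∈ Set.Icc (0:ℝ) 1, ∀ t ∈ Set.Icc (0:ℝ) 1,
      dist (σ x y s) (σ x y t) = |s - t| * dist x y

/-- A bicombing is conical if
`dist (σ x y t) (σ x' y' t) ≤ (1 - t) * dist x x' + t * dist y y'` for all `t ∈ [0,1]`. -/
def IsConical {X : Type*} [MetricSpace X] (σ : X → X → ℝ → X) : Prop :=
  ∀ x y x' y' : X, ∀ t ∈ Set.Icc (0:ℝ) 1,
    dist (σ x y t) (σ x' y' t) ≤ (1 - t) * dist x x' + t * dist y y'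

/-- A bicombing is reversible if `σ x y t = σ y x (1 - t)` for all `t ∈ [0,1]`. -/
def IsReversible {X : Type*} [MetricSpace X] (σ : X → X → ℝ → X) : Prop :=
  ∀ x y : X, ∀ t ∈ Set.Icc (0:ℝ) 1, σ x y t = σ y x (1 - t)

/-!
Fix `x y t` and put `m = σ x y t`. As `σ z z t = z`, conicality gives
`‖m - z‖ ≤ (1 - t) ‖x - z‖ + t ‖y - z‖` for all `z`: the norm is sub-mean-valued for the random
walk with steps `a = x - m` (probability `1 - t`) and `b = y - m` (probability `t`). After `n`
steps, at the starting point `-n c` where `c = (1 - t) a + t b` is the drift, this reads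
`n ‖c‖ ≤ E |K - n t| ‖b - a‖ ≤ √(n t (1 - t)) ‖b - a‖` with `K` binomially distributed, by the
variance of the Bernstein polynomials. Letting `n → ∞` forces `c = 0`, i.e.
`m = (1 - t) x + t y`.
-/

open Finset Polynomial

namespace bernsteinPolynomial

variable {R : Type*} [CommRing R]

theorem succ_zero (n : ℕ) :
    bernsteinPolynomial R (n + 1) 0 = (1 - X) * bernsteinPolynomial R n 0 := by
  simp [bernsteinPolynomial, pow_succ']

theorem succ_succ (n ν : ℕ) :
    bernsteinPolynomial R (n + 1) (ν + 1) =
      (1 - X) * bernsteinPolynomial R n (ν + 1) + X * bernsteinPolynomial R n ν := by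
  simp only [bernsteinPolynomial, Nat.choose_succ_succ', Nat.add_sub_add_right]
  rcases lt_or_ge ν n with h | h
  · obtain ⟨m, rfl⟩ := Nat.exists_eq_add_of_lt h
    rw [show ν + m + 1 - ν = m + 1 by omega, show ν + m + 1 - (ν + 1) = m by omega]
    push_cast
    ring
  · rw [Nat.choose_eq_zero_of_lt (Nat.lt_succ_of_le h)]
    push_cast
    ring

theorem sum_range_succ_eval_mul (g : ℕ → R) (x : R) (n : ℕ) :
    ∑ k ∈ range (n + 2), (bernsteinPolynomial R (n + 1) k).eval x * g k =
      (1 - x) * ∑ k ∈ range (n + 1), (bernsteinPolynomial R n k).eval x * g k +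
        x * ∑ k ∈ range (n + 1), (bernsteinPolynomial R n k).eval x * g (k + 1) := by
  have hlow : ∑ k ∈ range (n + 1), (bernsteinPolynomial R n k).eval x * g k =
      ∑ k ∈ range (n + 1), (bernsteinPolynomial R n (k + 1)).eval x * g (k + 1) +
        (bernsteinPolynomial R n 0).eval x * g 0 := by
    rw [← sum_range_succ' (fun k => (bernsteinPolynomial R n k).eval x * g k),
      sum_range_succ _ (n + 1), eq_zero_of_lt R n.lt_succ_self, eval_zero, zero_mul, add_zero]
  simp only [sum_range_succ' _ (n + 1), succ_succ, succ_zero, eval_add, eval_mul, eval_sub,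
    eval_one, eval_X, hlow, add_mul, sum_add_distrib, mul_add, mul_sum, mul_assoc]
  ring

theorem eval_nonneg {x : ℝ} (hx₀ : 0 ≤ x) (hx₁ : x ≤ 1) (n ν : ℕ) :
    0 ≤ (bernsteinPolynomial ℝ n ν).eval x := by
  have : 0 ≤ 1 - x := sub_nonneg.mpr hx₁
  simp only [bernsteinPolynomial, eval_mul, eval_pow, eval_sub, eval_one, eval_X, eval_natCast]
  positivity

theorem sum_eval_mul_sq (n : ℕ) (x : ℝ) :
    ∑ k ∈ range (n + 1), (bernsteinPolynomial ℝ n k).eval x * ((k : ℝ) - n * x) ^ 2 =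
      n * x * (1 - x) := by
  have h := congrArg (eval x) (variance ℝ n)
  simp only [eval_finsetSum, eval_mul, eval_pow, eval_sub, eval_natCast, eval_X,
    eval_one, nsmul_eq_mul] at h
  rw [← h]
  exact sum_congr rfl fun k _ => by ring

theorem sq_sum_eval_mul_abs_sub_le {x : ℝ} (hx₀ : 0 ≤ x) (hx₁ : x ≤ 1) (n : ℕ) :
    (∑ k ∈ range (n + 1), (bernsteinPolynomial ℝ n k).eval x * |(k : ℝ) - n * x|) ^ 2 ≤
      n * x * (1 - x) := by
  have hB := fun k (_ : k ∈ range (n + 1)) => eval_nonneg hx₀ hx₁ n k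
  calc _ ≤ (∑ k ∈ range (n + 1), (bernsteinPolynomial ℝ n k).eval x) *
        ∑ k ∈ range (n + 1), (bernsteinPolynomial ℝ n k).eval x * ((k : ℝ) - n * x) ^ 2 :=
        sum_sq_le_sum_mul_sum_of_sq_le_mul _ hB (fun k hk => mul_nonneg (hB k hk) (sq_nonneg _))
          fun k _ => by rw [mul_pow, sq_abs, sq, mul_assoc]
    _ = n * x * (1 - x) := by
        rw [← eval_finsetSum, bernsteinPolynomial.sum, eval_one, one_mul, sum_eval_mul_sq]

end bernsteinPolynomial

theorem le_sum_bernsteinPolynomial_eval_mul_of_forall_le {M : Type*} [AddCommGroup M]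
    {f : M → ℝ} {a b : M} {t : ℝ} (ht₀ : 0 ≤ t) (ht₁ : t ≤ 1)
    (h : ∀ w, f w ≤ (1 - t) * f (w + a) + t * f (w + b)) (n : ℕ) (w : M) :
    f w ≤ ∑ k ∈ range (n + 1),
      (bernsteinPolynomial ℝ n k).eval t * f (w + n • a + k • (b - a)) := by
  induction n generalizing w with
  | zero => simp [bernsteinPolynomial]
  | succ n ih =>
    have : 0 ≤ 1 - t := sub_nonneg.mpr ht₁
    calc f w ≤ (1 - t) * f (w + a) + t * f (w + b) := h w
      _ ≤ (1 - t) * ∑ k ∈ range (n + 1),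
            (bernsteinPolynomial ℝ n k).eval t * f (w + a + n • a + k • (b - a)) +
          t * ∑ k ∈ range (n + 1),
            (bernsteinPolynomial ℝ n k).eval t * f (w + b + n • a + k • (b - a)) := by
          gcongr <;> apply ih
      _ = _ := by
          rw [bernsteinPolynomial.sum_range_succ_eval_mul]
          congr 2 <;> refine sum_congr rfl fun k _ => ?_
          · congr 2
            rw [succ_nsmul']
            abel
          · congr 2
            rw [succ_nsmul', succ_nsmul]
            abel

theorem convex_comb_eq_zero_of_forall_norm_le {V : Type*} [NormedAddCommGroup V]
    [NormedSpace ℝ V] {a b : V} {t : ℝ} (ht₀ : 0 ≤ t) (ht₁ : t ≤ 1)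
    (h : ∀ w : V, ‖w‖ ≤ (1 - t) * ‖w + a‖ + t * ‖w + b‖) :
    (1 - t) • a + t • b = 0 := by
  set c := (1 - t) • a + t • b
  have hstep (n : ℕ) : (n : ℝ) * ‖c‖ ≤ (∑ k ∈ range (n + 1),
      (bernsteinPolynomial ℝ n k).eval t * |(k : ℝ) - n * t|) * ‖b - a‖ := by
    have hw := le_sum_bernsteinPolynomial_eval_mul_of_forall_le (f := (‖·‖)) ht₀ ht₁ h n
      (-((n : ℝ) • c))
    have hvec (k : ℕ) : -((n : ℝ) • c) + n • a + k • (b - a) = ((k : ℝ) - n * t) • (b - a) := by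
      simp only [c, ← Nat.cast_smul_eq_nsmul ℝ]
      module
    simp only [hvec, norm_neg, norm_smul, Real.norm_eq_abs, Nat.abs_cast] at hw
    simpa only [sum_mul, mul_assoc] using hw
  have hsq (n : ℕ) : (n : ℝ) * ‖c‖ ^ 2 ≤ ‖b - a‖ ^ 2 := by
    rcases n.eq_zero_or_pos with rfl | hn
    · simp
    refine le_of_mul_le_mul_left ?_ (Nat.cast_pos.mpr hn : (0 : ℝ) < n)
    calc (n : ℝ) * (n * ‖c‖ ^ 2) = (n * ‖c‖) ^ 2 := by ring
      _ ≤ ((∑ k ∈ range (n + 1),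
            (bernsteinPolynomial ℝ n k).eval t * |(k : ℝ) - n * t|) * ‖b - a‖) ^ 2 :=
          pow_le_pow_left₀ (by positivity) (hstep n) 2
      _ ≤ (n * t * (1 - t)) * ‖b - a‖ ^ 2 := by
          rw [mul_pow]
          exact mul_le_mul_of_nonneg_right
            (bernsteinPolynomial.sq_sum_eval_mul_abs_sub_le ht₀ ht₁ n) (by positivity)
      _ ≤ n * ‖b - a‖ ^ 2 := by
          rw [mul_assoc (n : ℝ)]
          gcongr
          exact mul_le_of_le_one_right (Nat.cast_nonneg n) (by nlinarith)
  by_contra hc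
  have hc₀ : 0 < ‖c‖ ^ 2 := by positivity
  obtain ⟨n, hn⟩ := exists_nat_gt (‖b - a‖ ^ 2 / ‖c‖ ^ 2)
  exact (hsq n).not_gt ((div_lt_iff₀ hc₀).mp hn)

theorem IsGeodesicBicombing.apply_self {X : Type*} [MetricSpace X] {σ : X → X → ℝ → X}
    (hσ : IsGeodesicBicombing σ) (z : X) {t : ℝ} (ht : t ∈ Set.Icc (0 : ℝ) 1) : σ z z t = z := by
  have h := hσ.2.2 z z 0 (Set.left_mem_Icc.mpr zero_le_one) t ht
  rwa [dist_self, mul_zero, dist_eq_zero, hσ.1, eq_comm] at h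

theorem IsConical.dist_apply_le {X : Type*} [MetricSpace X] {σ : X → X → ℝ → X}
    (hcon : IsConical σ) (hgeo : IsGeodesicBicombing σ) (x y z : X) {t : ℝ}
    (ht : t ∈ Set.Icc (0 : ℝ) 1) :
    dist (σ x y t) z ≤ (1 - t) * dist x z + t * dist y z := by
  simpa only [hgeo.apply_self z ht] using hcon x y z z t ht

theorem banach_conical_bicombing_eq_linear_general
    {V : Type*} [NormedAddCommGroup V] [NormedSpace ℝ V]
    (σ : V → V → ℝ → V) (hgeo : IsGeodesicBicombing σ) (hcon : IsConical σ) :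
    ∀ x y : V, ∀ t ∈ Set.Icc (0:ℝ) 1, σ x y t = (1 - t) • x + t • y := by
  intro x y t ht
  set m := σ x y t
  have hle (w : V) : ‖w‖ ≤ (1 - t) * ‖w + (x - m)‖ + t * ‖w + (y - m)‖ := by
    have hdist (p : V) : dist p (m - w) = ‖w + (p - m)‖ := by
      rw [dist_eq_norm]
      congr 1
      abel
    have h := hcon.dist_apply_le hgeo x y (m - w) ht
    rwa [hdist, hdist, hdist, sub_self, add_zero] at h
  have hzero := convex_comb_eq_zero_of_forall_norm_le ht.1 ht.2 hle
  linear_combination (norm := module) -hzero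

/-- **Proposition 3.3.** A Banach space admits only one conical geodesic bicombing, given by
linear segments: every conical geodesic bicombing `σ` (not assumed reversible) on a real
Banach space satisfies `σ x y t = (1 - t) • x + t • y` for all `x, y` and `t ∈ [0,1]`. -/
theorem banach_conical_bicombing_eq_linear
    {V : Type*} [NormedAddCommGroup V] [NormedSpace ℝ V] [CompleteSpace V]
    (σ : V → V → ℝ → V) (hgeo : IsGeodesicBicombing σ) (hcon : IsConical σ) :
    ∀ x y : V, ∀ t ∈ Set.Icc (0:ℝ) 1, σ x y t = (1 - t) • x + t • y :=
  banach_conical_bicombing_eq_linear_general σ hgeo hcon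
end

section
/- Let (X,d) be a proper metric space. If X admits a conical geodesic bicombing, then X admits a reversible conical geodesic bicombing. -/
open Filter Topology Metric

section

variable {X : Type*} {σ : X → X → ℝ → X}

namespace Bicombing

noncomputable def midpoints (σ : X → X → ℝ → X) (p : X × X) : X × X :=
  (σ p.1 p.2 (1/2), σ p.2 p.1 (1/2))

lemma iterate_midpoints_swap (n : ℕ) (p : X × X) :
    (midpoints σ)^[n] p.swap = ((midpoints σ)^[n] p).swap :=
  Function.Commute.iterate_left (f := midpoints σ) (g := Prod.swap) (fun _ ↦ rfl) n p

end Bicombing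

variable [MetricSpace X]

namespace IsGeodesicBicombing

lemma apply_self_s17 (hσ : IsGeodesicBicombing σ) (x : X) {t : ℝ} (ht : t ∈ Set.Icc (0:ℝ) 1) :
    σ x x t = x := by
  simpa [hσ.1] using hσ.2.2 x x t ht 0 (by norm_num)

lemma dist_left_apply (hσ : IsGeodesicBicombing σ) (x y : X) {t : ℝ}
    (ht : t ∈ Set.Icc (0:ℝ) 1) : dist x (σ x y t) = t * dist x y := by
  simpa [hσ.1, abs_of_nonneg ht.1] using hσ.2.2 x y 0 (by norm_num) t ht

lemma dist_right_apply (hσ : IsGeodesicBicombing σ) (x y : X) {t : ℝ}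
    (ht : t ∈ Set.Icc (0:ℝ) 1) : dist y (σ x y t) = (1 - t) * dist x y := by
  simpa [hσ.2.1, abs_of_nonneg (sub_nonneg.2 ht.2)] using hσ.2.2 x y 1 (by norm_num) t ht

end IsGeodesicBicombing

lemma isGeodesicBicombing_of_dist_le {τ : X → X → ℝ → X} (h0 : ∀ x y, τ x y 0 = x)
    (h1 : ∀ x y, τ x y 1 = y)
    (hle : ∀ x y : X, ∀ s ∈ Set.Icc (0:ℝ) 1, ∀ t ∈ Set.Icc (0:ℝ) 1,
      dist (τ x y s) (τ x y t) ≤ |s - t| * dist x y) :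
    IsGeodesicBicombing τ := by
  refine ⟨h0, h1, fun x y s hs t ht ↦ le_antisymm (hle x y s hs t ht) ?_⟩
  wlog hst : s ≤ t generalizing s t
  · rw [dist_comm (τ x y s), abs_sub_comm]
    exact this t ht s hs (le_of_not_ge hst)
  have hxs := hle x y 0 (by norm_num) s hs
  have hty := hle x y t ht 1 (by norm_num)
  rw [h0, zero_sub, abs_neg, abs_of_nonneg hs.1] at hxs
  rw [h1, abs_sub_comm, abs_of_nonneg (sub_nonneg.2 ht.2)] at hty
  rw [abs_sub_comm, abs_of_nonneg (sub_nonneg.2 hst)]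
  linarith [dist_triangle4 x (τ x y s) (τ x y t) y]

namespace Bicombing

lemma iterate_midpoints_diag (hσ : IsGeodesicBicombing σ) (n : ℕ) (x : X) :
    (midpoints σ)^[n] (x, x) = (x, x) :=
  Function.iterate_fixed (by rw [midpoints, hσ.apply_self_s17 x (by norm_num)]) n

lemma lipschitzWith_midpoints (hc : IsConical σ) : LipschitzWith 1 (midpoints σ) := by
  refine LipschitzWith.of_dist_le_mul fun p q ↦ ?_
  have h1 := hc p.1 p.2 q.1 q.2 (1/2) (by norm_num)
  have h2 := hc p.2 p.1 q.2 q.1 (1/2) (by norm_num)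
  simp only [NNReal.coe_one, one_mul, Prod.dist_eq, midpoints, max_le_iff]
  constructor <;> linarith [le_max_left (dist p.1 q.1) (dist p.2 q.2),
    le_max_right (dist p.1 q.1) (dist p.2 q.2)]

lemma dist_iterate_midpoints_le (hc : IsConical σ) (n : ℕ) (p q : X × X) :
    dist ((midpoints σ)^[n] p) ((midpoints σ)^[n] q) ≤ dist p q := by
  simpa using ((lipschitzWith_midpoints hc).iterate n).dist_le_mul p q

lemma dist_iterate_midpoints_diag_le (hσ : IsGeodesicBicombing σ) (hc : IsConical σ) (n : ℕ)
    (x : X) (p : X × X) : dist (x, x) ((midpoints σ)^[n] p) ≤ dist (x, x) p := by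
  simpa [iterate_midpoints_diag hσ] using dist_iterate_midpoints_le hc n (x, x) p

lemma dist_midpoints_diag (hσ : IsGeodesicBicombing σ) (p : X × X) :
    dist (p.1, p.1) (midpoints σ p) = dist p.1 p.2 / 2 ∧
      dist (p.2, p.2) (midpoints σ p) = dist p.1 p.2 / 2 := by
  have half : (1/2 : ℝ) ∈ Set.Icc (0:ℝ) 1 := by norm_num
  rw [Prod.dist_eq, Prod.dist_eq]
  dsimp only [midpoints]
  rw [hσ.dist_left_apply _ _ half, hσ.dist_right_apply _ _ half, hσ.dist_left_apply _ _ half,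
    hσ.dist_right_apply _ _ half, dist_comm p.2 p.1]
  norm_num [max_self, div_eq_inv_mul]

lemma antitone_dist_iterate_midpoints (hc : IsConical σ) (p : X × X) :
    Antitone fun n ↦ dist ((midpoints σ)^[n] p).1 ((midpoints σ)^[n] p).2 := by
  refine antitone_nat_of_succ_le fun n ↦ ?_
  set q := (midpoints σ)^[n] p
  have := hc q.1 q.2 q.2 q.1 (1/2) (by norm_num)
  rw [dist_comm q.2] at this
  rw [Function.iterate_succ_apply', midpoints]
  linarith

lemma dist_fst_iterate_midpoints (hσ : IsGeodesicBicombing σ) (hc : IsConical σ) (q : X × X)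
    {n m : ℕ} (hnm : n < m) :
    dist ((midpoints σ)^[n] q).1 ((midpoints σ)^[m] q).1 =
      dist ((midpoints σ)^[n] q).1 ((midpoints σ)^[n] q).2 / 2 := by
  obtain ⟨k, rfl⟩ := Nat.exists_eq_add_of_lt hnm
  set p := (midpoints σ)^[n] q
  have hp : (midpoints σ)^[n + k + 1] q = (midpoints σ)^[k] (midpoints σ p) := by
    rw [← Function.iterate_succ_apply, ← Function.iterate_add_apply]
    congr 1
    omega
  set z := (midpoints σ)^[k] (midpoints σ p)
  rw [hp]
  have hz : ∀ x, dist (x, x) (midpoints σ p) = dist p.1 p.2 / 2 →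
      dist x z.1 ≤ dist p.1 p.2 / 2 := fun x hx ↦ (le_max_left _ _).trans (hx ▸ dist_iterate_midpoints_diag_le hσ hc k x _)
  have hz1 := hz p.1 (dist_midpoints_diag hσ p).1
  have hz2 := hz p.2 (dist_midpoints_diag hσ p).2
  -- the two bounds add up to `dist p.1 p.2`, so the triangle inequality through `z.1` is tight
  linarith [dist_triangle p.1 z.1 p.2, dist_comm p.2 z.1]

noncomputable def midpointLimit (σ : X → X → ℝ → X) (q : X × X) : X :=
  haveI : Nonempty X := ⟨q.1⟩
  limUnder atTop fun n ↦ ((midpoints σ)^[n] q).1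

noncomputable def symmetrization (σ : X → X → ℝ → X) (x y : X) (t : ℝ) : X :=
  midpointLimit σ (σ x y t, σ y x (1 - t))

variable [ProperSpace X]

lemma tendsto_dist_iterate_midpoints (hσ : IsGeodesicBicombing σ) (hc : IsConical σ)
    (q : X × X) :
    Tendsto (fun n ↦ dist ((midpoints σ)^[n] q).1 ((midpoints σ)^[n] q).2) atTop (𝓝 0) := by
  have hbdd : ∀ n, ((midpoints σ)^[n] q).1 ∈ closedBall q.1 (dist (q.1, q.1) q) := fun n ↦
    mem_closedBall'.2 ((le_max_left _ _).trans (dist_iterate_midpoints_diag_le hσ hc n q.1 q))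
  obtain ⟨z, -, φ, hφ, hz⟩ := (isCompact_closedBall _ _).tendsto_subseq hbdd
  rw [Metric.tendsto_atTop]
  intro ε hε
  obtain ⟨N, hN⟩ := Metric.cauchySeq_iff'.1 hz.cauchySeq (ε / 2) (half_pos hε)
  refine ⟨φ N, fun n hn ↦ ?_⟩
  have hgap := hN (N + 1) N.le_succ
  rw [Function.comp_apply, Function.comp_apply, dist_comm,
    dist_fst_iterate_midpoints hσ hc q (hφ N.lt_succ_self)] at hgap
  rw [Real.dist_0_eq_abs, abs_of_nonneg dist_nonneg]
  linarith [antitone_dist_iterate_midpoints hc q hn]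

lemma exists_tendsto_iterate_midpoints (hσ : IsGeodesicBicombing σ) (hc : IsConical σ)
    (q : X × X) :
    ∃ z, Tendsto (fun n ↦ ((midpoints σ)^[n] q).1) atTop (𝓝 z) ∧
      Tendsto (fun n ↦ ((midpoints σ)^[n] q).2) atTop (𝓝 z) := by
  have hgap := tendsto_dist_iterate_midpoints hσ hc q
  have hcauchy : CauchySeq fun n ↦ ((midpoints σ)^[n] q).1 := by
    refine cauchySeq_of_le_tendsto_0' _ (fun n m hnm ↦ ?_) hgap
    rcases hnm.lt_or_eq with hlt | rfl
    · rw [dist_fst_iterate_midpoints hσ hc q hlt]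
      linarith [dist_nonneg (x := ((midpoints σ)^[n] q).1) (y := ((midpoints σ)^[n] q).2)]
    · simp
  obtain ⟨z, hz⟩ := cauchySeq_tendsto_of_complete hcauchy
  exact ⟨z, hz, hz.congr_dist hgap⟩

lemma tendsto_midpointLimit (hσ : IsGeodesicBicombing σ) (hc : IsConical σ) (q : X × X) :
    Tendsto (fun n ↦ ((midpoints σ)^[n] q).1) atTop (𝓝 (midpointLimit σ q)) ∧
      Tendsto (fun n ↦ ((midpoints σ)^[n] q).2) atTop (𝓝 (midpointLimit σ q)) := by
  obtain ⟨z, h1, h2⟩ := exists_tendsto_iterate_midpoints hσ hc q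
  rw [midpointLimit, h1.limUnder_eq]
  exact ⟨h1, h2⟩

lemma midpointLimit_swap (hσ : IsGeodesicBicombing σ) (hc : IsConical σ) (q : X × X) :
    midpointLimit σ q.swap = midpointLimit σ q := by
  have h := (tendsto_midpointLimit hσ hc q.swap).1
  simp only [iterate_midpoints_swap, Prod.fst_swap] at h
  exact tendsto_nhds_unique h (tendsto_midpointLimit hσ hc q).2

lemma midpointLimit_diag (hσ : IsGeodesicBicombing σ) (hc : IsConical σ) (x : X) :
    midpointLimit σ (x, x) = x := by
  have h := (tendsto_midpointLimit hσ hc (x, x)).1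
  simp only [iterate_midpoints_diag hσ] at h
  exact tendsto_nhds_unique h tendsto_const_nhds

lemma dist_midpointLimit_le (hσ : IsGeodesicBicombing σ) (hc : IsConical σ) (p q : X × X) :
    dist (midpointLimit σ p) (midpointLimit σ q) ≤ dist p q :=
  le_of_tendsto ((tendsto_midpointLimit hσ hc p).1.dist (tendsto_midpointLimit hσ hc q).1)
    (Eventually.of_forall fun n ↦ (le_max_left _ _).trans (dist_iterate_midpoints_le hc n p q))

lemma isGeodesicBicombing_symmetrization (hσ : IsGeodesicBicombing σ) (hc : IsConical σ) :
    IsGeodesicBicombing (symmetrization σ) := by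
  refine isGeodesicBicombing_of_dist_le (fun x y ↦ ?_) (fun x y ↦ ?_) fun x y s hs t ht ↦ ?_
  · rw [symmetrization, sub_zero, hσ.1, hσ.2.1, midpointLimit_diag hσ hc]
  · rw [symmetrization, sub_self, hσ.1, hσ.2.1, midpointLimit_diag hσ hc]
  · refine (dist_midpointLimit_le hσ hc _ _).trans_eq ?_
    rw [Prod.dist_eq, hσ.2.2 x y s hs t ht,
      hσ.2.2 y x _ (Set.Icc.mem_iff_one_sub_mem.1 hs) _ (Set.Icc.mem_iff_one_sub_mem.1 ht),
      sub_sub_sub_cancel_left, abs_sub_comm, dist_comm y x, max_self]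

lemma isConical_symmetrization (hσ : IsGeodesicBicombing σ) (hc : IsConical σ) :
    IsConical (symmetrization σ) := by
  intro x y x' y' t ht
  refine (dist_midpointLimit_le hσ hc _ _).trans (max_le (hc x y x' y' t ht) ?_)
  linarith [hc y x y' x' (1 - t) (Set.Icc.mem_iff_one_sub_mem.1 ht)]

lemma isReversible_symmetrization (hσ : IsGeodesicBicombing σ) (hc : IsConical σ) :
    IsReversible (symmetrization σ) := by
  intro x y t _
  rw [symmetrization, symmetrization, sub_sub_cancel]
  exact (midpointLimit_swap hσ hc _).symm

end Bicombing

end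

/-- **Lemma 4.4.** Every proper metric space admitting a conical geodesic bicombing admits a
reversible conical geodesic bicombing. -/
theorem proper_conical_bicombing_exists_reversible
    {X : Type*} [MetricSpace X] [ProperSpace X]
    (h : ∃ σ : X → X → ℝ → X, IsGeodesicBicombing σ ∧ IsConical σ) :
    ∃ τ : X → X → ℝ → X, IsGeodesicBicombing τ ∧ IsConical τ ∧ IsReversible τ := by
  obtain ⟨σ, hσ, hc⟩ := h
  exact ⟨Bicombing.symmetrization σ, Bicombing.isGeodesicBicombing_symmetrization hσ hc,
    Bicombing.isConical_symmetrization hσ hc, Bicombing.isReversible_symmetrization hσ hc⟩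
end
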